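/- Let n ≥ 1. The set 𝒩_n ∩ 𝒮_n is dense in 𝒮_n: for every real n×n matrix A with all complex eigenvalues in the open unit disk and every ε > 0, there exists a real n×n matrix B with all complex eigenvalues in the open unit disk, with n distinct complex eigenvalues, with (B,B) ∞-nonresonant, and with ‖B − A‖ < ε. -/

import Mathlib

/-!
Pick a real diagonal matrix `D` with distinct entries in `(1/2, 3/5]`: every product of at least
two of them is at most `9/25 < 1/2`, so `D` is nonresonant. Move along the line
`t ↦ A + t • (D - A)`. Injectivity and each resonance relation of an eigenvalue list is the
vanishing of a polynomial in the eigenvalues; its product over all permutations is symmetric,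
hence a polynomial in the coefficients of the characteristic polynomial, hence a polynomial in
`t`. That polynomial does not vanish at `t = 1`, so it has finitely many zeros, and all but
countably many `t` give a matrix in `𝒩_n`. By Gelfand's formula the spectral radius is `< 1`
iff some `‖M ^ k‖ < 1`, an open condition, so `𝒮_n` is open and small such `t` do the job.
-/

noncomputable section
open Matrix Polynomial

/-- `eig` lists the complex eigenvalues of the real matrix `A` with algebraic multiplicity,
i.e. the characteristic polynomial of the complexification of `A` factors as
`∏ i, (X - eig i)`. -/
def IsEigList {n : ℕ} (A : Matrix (Fin n) (Fin n) ℝ) (eig : Fin n → ℂ) : Prop :=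
  (A.map Complex.ofReal).charpoly = ∏ i, (X - C (eig i))

/-- `A ∈ 𝒩_n`: `A` is invertible, has `n` distinct complex eigenvalues, and `(A,A)`
is `∞`-nonresonant (no eigenvalue equals a product `λ_1^{m_1} ⋯ λ_n^{m_n}` with
`m_1 + ⋯ + m_n ≥ 2`). -/
def MemN {n : ℕ} (A : Matrix (Fin n) (Fin n) ℝ) : Prop :=
  A.det ≠ 0 ∧ ∀ eig : Fin n → ℂ, IsEigList A eig →
    Function.Injective eig ∧
      ∀ (i : Fin n) (m : Fin n → ℕ), 2 ≤ ∑ j, m j → eig i ≠ ∏ j, eig j ^ m j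

/-- `A ∈ 𝒮_n`: all complex eigenvalues of `A` lie in the open unit disk. -/
def MemS {n : ℕ} (A : Matrix (Fin n) (Fin n) ℝ) : Prop :=
  ∀ eig : Fin n → ℂ, IsEigList A eig → ∀ i, ‖eig i‖ < 1

theorem Polynomial.Splits.exists_eq_prod_fin_of_monic {K : Type*} [Field K] {p : K[X]}
    (hs : p.Splits) (hp : p.Monic) {n : ℕ} (hn : p.natDegree = n) :
    ∃ e : Fin n → K, p = ∏ i, (X - C (e i)) := by
  classical
  have hcard : Fintype.card p.roots.ToType = n := by
    rw [Multiset.card_coe, ← hn, ← splits_iff_card_roots.mp hs]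
  let f := Fintype.equivFinOfCardEq hcard
  refine ⟨fun i => f.symm i, ?_⟩
  conv_lhs => rw [hs.eq_prod_roots_of_monic hp, ← Multiset.map_univ_comp_coe]
  exact (f.symm.prod_comp fun x : p.roots => X - C (x : K)).symm

variable {n : ℕ}

theorem exists_isEigList (A : Matrix (Fin n) (Fin n) ℝ) : ∃ e, IsEigList A e :=
  (IsAlgClosed.splits _).exists_eq_prod_fin_of_monic (charpoly_monic _)
    ((charpoly_natDegree_eq_dim _).trans (Fintype.card_fin n))

theorem isEigList_diagonal (d : Fin n → ℝ) : IsEigList (diagonal d) fun i => d i := by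
  rw [IsEigList, diagonal_map Complex.ofReal_zero, charpoly_diagonal]

theorem IsEigList.mem_spectrum_iff {A : Matrix (Fin n) (Fin n) ℝ} {e : Fin n → ℂ}
    (h : IsEigList A e) {z : ℂ} : z ∈ spectrum ℂ (A.map Complex.ofReal) ↔ ∃ i, e i = z := by
  rw [mem_spectrum_iff_isRoot_charpoly, h, IsRoot, eval_prod, Finset.prod_eq_zero_iff]
  simp [sub_eq_zero, eq_comm]

theorem IsEigList.det_eq_prod {A : Matrix (Fin n) (Fin n) ℝ} {e : Fin n → ℂ}
    (h : IsEigList A e) : (A.det : ℂ) = ∏ i, e i := by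
  have := det_eq_sign_charpoly_coeff (A.map Complex.ofReal)
  rw [h, coeff_zero_eq_eval_zero, eval_prod] at this
  simp only [eval_sub, eval_X, eval_C, zero_sub, Finset.prod_neg, Finset.card_univ,
    Fintype.card_fin, ← mul_assoc, ← mul_pow, neg_one_mul, neg_neg, one_pow, one_mul] at this
  rw [← this]
  exact RingHom.map_det Complex.ofRealHom A

theorem memS_iff_spectralRadius_lt_one (A : Matrix (Fin n) (Fin n) ℝ) :
    MemS A ↔ spectralRadius ℂ (A.map Complex.ofReal) < 1 := by
  obtain ⟨e, he⟩ := exists_isEigList A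
  constructor
  · intro hA
    calc spectralRadius ℂ (A.map Complex.ofReal) ≤ Finset.univ.sup fun i => ‖e i‖ₑ :=
          iSup₂_le fun z hz => by
            obtain ⟨i, rfl⟩ := he.mem_spectrum_iff.1 hz
            exact Finset.le_sup (f := fun i => ‖e i‖ₑ) (Finset.mem_univ i)
      _ < 1 := (Finset.sup_lt_iff one_pos).2 fun i _ => by
          simpa [← ofReal_norm] using hA e he i
  · intro h e he i
    have hle : ‖e i‖ₑ ≤ spectralRadius ℂ (A.map Complex.ofReal) :=
      le_iSup₂ (f := fun z _ => ‖z‖ₑ) (e i) (he.mem_spectrum_iff.2 ⟨i, rfl⟩)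
    simpa [← ofReal_norm] using hle.trans_lt h

open Filter Topology
open scoped ENNReal

namespace spectrum

variable {𝔸 : Type*} [NormedRing 𝔸] [NormedAlgebra ℂ 𝔸] [CompleteSpace 𝔸] [NormOneClass 𝔸]

theorem spectralRadius_lt_one_iff_exists_norm_pow_lt_one (a : 𝔸) :
    spectralRadius ℂ a < 1 ↔ ∃ k : ℕ, ‖a ^ (k + 1)‖ < 1 := by
  have hroot (k : ℕ) : (‖a ^ (k + 1)‖₊ : ℝ≥0∞) ^ (1 / (k + 1 : ℝ)) < 1 ↔ ‖a ^ (k + 1)‖ < 1 := by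
    rw [← ENNReal.one_rpow (1 / (k + 1 : ℝ)), ENNReal.rpow_lt_rpow_iff (by positivity),
      ENNReal.coe_lt_one_iff, ← NNReal.coe_lt_one, coe_nnnorm]
  constructor
  · intro h
    have hG := (tendsto_add_atTop_iff_nat 1).2
      (pow_nnnorm_pow_one_div_tendsto_nhds_spectralRadius a)
    obtain ⟨k, hk⟩ := (hG.eventually (gt_mem_nhds h)).exists
    exact ⟨k, (hroot k).1 (by exact_mod_cast hk)⟩
  · rintro ⟨k, hk⟩
    calc spectralRadius ℂ a ≤ (‖a ^ (k + 1)‖₊ : ℝ≥0∞) ^ (1 / (k + 1 : ℝ)) := by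
          simpa using spectralRadius_le_pow_nnnorm_pow_one_div ℂ a k
      _ < 1 := (hroot k).2 hk

theorem isOpen_setOf_spectralRadius_lt_one : IsOpen {a : 𝔸 | spectralRadius ℂ a < 1} := by
  simp only [spectralRadius_lt_one_iff_exists_norm_pow_lt_one, Set.ofPred_exists]
  exact isOpen_iUnion fun k => isOpen_lt (by fun_prop) continuous_const

end spectrum

section
attribute [local instance] Matrix.linftyOpNormedRing Matrix.linftyOpNormedAlgebra

theorem isOpen_setOf_memS : IsOpen {A : Matrix (Fin n) (Fin n) ℝ | MemS A} := by
  -- the `L∞` operator norm is a `NormOneClass` only for a nonempty index type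
  cases isEmpty_or_nonempty (Fin n)
  · simp [MemS]
  · simp only [memS_iff_spectralRadius_lt_one]
    exact spectrum.isOpen_setOf_spectralRadius_lt_one.preimage (by fun_prop)

end

namespace MvPolynomial

theorem IsSymmetric.exists_aeval_eq_aeval_coeff {R : Type*} [CommRing R]
    {S : MvPolynomial (Fin n) R} (hS : S.IsSymmetric) :
    ∃ Q : MvPolynomial (Fin n) R, ∀ e : Fin n → R, aeval e S =
      aeval (fun k : Fin n => (-1) ^ (k.1 + 1) *
        (∏ i, (Polynomial.X - Polynomial.C (e i))).coeff (n - (k.1 + 1))) Q := by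
  obtain ⟨Q, hQ⟩ := esymmAlgHom_surjective R (Fintype.card_fin n).le ⟨S, hS⟩
  refine ⟨Q, fun e => ?_⟩
  rw [show S = _ from congrArg Subtype.val hQ.symm, esymmAlgHom_apply, comp_aeval_apply]
  congr 2 with k
  -- Vieta: `esymm (k + 1)` of the roots is `(-1) ^ (k + 1) * coeff (n - (k + 1))`.
  have hcard : Multiset.card (Finset.univ.val.map e) = n := by simp
  rw [Finset.prod_eq_multiset_prod, ← Function.comp_def (fun a => Polynomial.X - Polynomial.C a) e,
    ← Multiset.map_map, Multiset.prod_X_sub_C_coeff _ (by omega), hcard, Nat.sub_sub_self k.isLt,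
    aeval_esymm_eq_multiset_esymm, ← mul_assoc, ← mul_pow]
  norm_num

variable {σ R : Type*} [Fintype σ] [DecidableEq σ] [CommRing R]

def symmetrize (P : MvPolynomial σ R) : MvPolynomial σ R :=
  ∏ τ : Equiv.Perm σ, rename τ P

theorem isSymmetric_symmetrize (P : MvPolynomial σ R) : (symmetrize P).IsSymmetric := by
  intro τ
  simp only [symmetrize, map_prod, rename_rename]
  exact Fintype.prod_equiv (Equiv.mulLeft τ) _ _ fun _ => rfl

theorem aeval_symmetrize_ne_zero_iff [IsDomain R] {P : MvPolynomial σ R} {e : σ → R} :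
    aeval e (symmetrize P) ≠ 0 ↔ ∀ τ : Equiv.Perm σ, aeval (e ∘ τ) P ≠ 0 := by
  simp [symmetrize, map_prod, aeval_rename, Finset.prod_ne_zero_iff]

end MvPolynomial

section Line

variable (A E : Matrix (Fin n) (Fin n) ℝ)

theorem exists_eval_eq_aeval_of_isEigList {S : MvPolynomial (Fin n) ℂ} (hS : S.IsSymmetric) :
    ∃ H : ℂ[X], ∀ (t : ℝ) (e : Fin n → ℂ), IsEigList (A + t • E) e →
      H.eval (t : ℂ) = MvPolynomial.aeval e S := by
  obtain ⟨Q, hQ⟩ := hS.exists_aeval_eq_aeval_coeff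
  let N : Matrix (Fin n) (Fin n) ℂ[X] := of fun i j => C (A i j : ℂ) + X * C (E i j : ℂ)
  have hN (t : ℝ) : N.map (evalRingHom (t : ℂ)) = (A + t • E).map Complex.ofReal := by
    ext i j
    simp [N]
    ring
  refine ⟨MvPolynomial.aeval
    (fun k : Fin n => (-1) ^ (k.1 + 1) * N.charpoly.coeff (n - (k.1 + 1))) Q, fun t e he => ?_⟩
  rw [hQ, ← he, ← hN, charpoly_map, ← coe_aeval_eq_eval, MvPolynomial.comp_aeval_apply]
  simp only [coeff_map, coe_evalRingHom, coe_aeval_eq_eval, eval_mul, eval_pow, eval_neg, eval_one]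

theorem finite_setOf_isEigList_aeval_eq_zero {S : MvPolynomial (Fin n) ℂ} (hS : S.IsSymmetric)
    {t₀ : ℝ} {e₀ : Fin n → ℂ} (he₀ : IsEigList (A + t₀ • E) e₀)
    (hS₀ : MvPolynomial.aeval e₀ S ≠ 0) :
    {t : ℝ | ∃ e, IsEigList (A + t • E) e ∧ MvPolynomial.aeval e S = 0}.Finite := by
  obtain ⟨H, hH⟩ := exists_eval_eq_aeval_of_isEigList A E hS
  have hH₀ : H ≠ 0 := by
    rintro rfl
    exact hS₀ (by simpa using (hH t₀ e₀ he₀).symm)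
  refine ((finite_setOfPred_isRoot hH₀).preimage Complex.ofReal_injective.injOn).subset ?_
  rintro t ⟨e, he, hSe⟩
  exact (hH t e he).trans hSe

end Line

section Nonresonance

variable {K : Type*} [CommRing K]

def IsSimpleNonresonant (e : Fin n → K) : Prop :=
  Function.Injective e ∧ ∀ (i : Fin n) (m : Fin n → ℕ), 2 ≤ ∑ j, m j → e i ≠ ∏ j, e j ^ m j

theorem IsSimpleNonresonant.ne_zero {e : Fin n → K} (h : IsSimpleNonresonant e) (i : Fin n) :
    e i ≠ 0 := by
  intro hi
  refine h.2 i (Pi.single i 2) (by simp) ?_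
  simp [Pi.single_apply, hi]

theorem IsSimpleNonresonant.comp_perm {e : Fin n → K} (h : IsSimpleNonresonant e)
    (τ : Equiv.Perm (Fin n)) : IsSimpleNonresonant (e ∘ τ) := by
  refine ⟨h.1.comp τ.injective, fun i m hm heq => h.2 (τ i) (m ∘ τ.symm) ?_ ?_⟩
  · simpa only [Function.comp_apply, Equiv.sum_comp] using hm
  · rw [← Equiv.prod_comp τ]
    simpa using heq

variable (n K) in
def resonancePolys : Set (MvPolynomial (Fin n) K) :=
  {MvPolynomial.X i - MvPolynomial.X j | (i : Fin n) (j : Fin n) (_ : i ≠ j)} ∪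
    {MvPolynomial.X i - ∏ j, MvPolynomial.X j ^ m j |
      (i : Fin n) (m : Fin n → ℕ) (_ : 2 ≤ ∑ j, m j)}

theorem countable_resonancePolys : (resonancePolys n K).Countable := by
  refine .union ?_ ?_
  · refine (Set.countable_range fun p : Fin n × Fin n =>
      (MvPolynomial.X p.1 - MvPolynomial.X p.2 : MvPolynomial (Fin n) K)).mono ?_
    rintro _ ⟨i, j, -, rfl⟩
    exact ⟨(i, j), rfl⟩
  · refine (Set.countable_range fun p : Fin n × (Fin n → ℕ) =>
      (MvPolynomial.X p.1 - ∏ j, MvPolynomial.X j ^ p.2 j : MvPolynomial (Fin n) K)).mono ?_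
    rintro _ ⟨i, m, -, rfl⟩
    exact ⟨(i, m), rfl⟩

theorem isSimpleNonresonant_iff_forall_aeval_ne_zero {e : Fin n → K} :
    IsSimpleNonresonant e ↔ ∀ P ∈ resonancePolys n K, MvPolynomial.aeval e P ≠ 0 := by
  constructor
  · rintro ⟨hinj, hres⟩ P (⟨i, j, hij, rfl⟩ | ⟨i, m, hm, rfl⟩) <;> simp only [map_sub,
      map_prod, map_pow, MvPolynomial.aeval_X, ne_eq, sub_eq_zero]
    · exact hinj.ne hij
    · exact hres i m hm
  · intro h
    refine ⟨fun i j hij => by_contra fun hne => h _ (Or.inl ⟨i, j, hne, rfl⟩) (by simp [hij]),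
      fun i m hm heq => h _ (Or.inr ⟨i, m, hm, rfl⟩) (by simp [heq])⟩

end Nonresonance

theorem isSimpleNonresonant_ofReal {a b : ℝ} (ha : 0 ≤ a) (hb : b ≤ 1) (hab : b ^ 2 ≤ a)
    {d : Fin n → ℝ} (hd : Function.Injective d) (hmem : ∀ i, d i ∈ Set.Ioc a b) :
    IsSimpleNonresonant fun i => (d i : ℂ) := by
  refine ⟨Complex.ofReal_injective.comp hd, fun i m hm heq => ?_⟩
  beta_reduce at heq
  have hd₀ (j : Fin n) : 0 ≤ d j := ha.trans (hmem j).1.le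
  have hlt : ∏ j, d j ^ m j < d i := calc
    ∏ j, d j ^ m j ≤ ∏ j, b ^ m j :=
      Finset.prod_le_prod (fun j _ => pow_nonneg (hd₀ j) _)
        fun j _ => pow_le_pow_left₀ (hd₀ j) (hmem j).2 _
    _ = b ^ ∑ j, m j := Finset.prod_pow_eq_pow_sum _ _ _
    _ ≤ b ^ 2 := pow_le_pow_of_le_one ((hd₀ i).trans (hmem i).2) hb hm
    _ ≤ a := hab
    _ < d i := (hmem i).1
  exact hlt.ne (mod_cast heq.symm)

variable (n) in
theorem exists_isSimpleNonresonant_ofReal :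
    ∃ d : Fin n → ℝ, IsSimpleNonresonant fun i => (d i : ℂ) := by
  refine ⟨fun i => 1 / 2 + 1 / ((i : ℝ) + 10), isSimpleNonresonant_ofReal (a := 1 / 2)
    (b := 3 / 5) (by norm_num) (by norm_num) (by norm_num)
    (fun i j h => Fin.ext (by simpa using h)) fun i => ⟨?_, ?_⟩⟩
  · simp only [lt_add_iff_pos_right]
    positivity
  · have : 1 / ((i : ℝ) + 10) ≤ 1 / 10 := by gcongr; simp
    linarith

theorem memN_of_forall_isEigList {A : Matrix (Fin n) (Fin n) ℝ}
    (h : ∀ e, IsEigList A e → IsSimpleNonresonant e) : MemN A := by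
  refine ⟨fun hdet => ?_, h⟩
  obtain ⟨e, he⟩ := exists_isEigList A
  have hprod := he.det_eq_prod
  rw [hdet, Complex.ofReal_zero] at hprod
  exact Finset.prod_ne_zero_iff.2 (fun i _ => (h e he).ne_zero i) hprod.symm

theorem countable_setOf_not_isSimpleNonresonant (A E : Matrix (Fin n) (Fin n) ℝ) {t₀ : ℝ}
    {e₀ : Fin n → ℂ} (he₀ : IsEigList (A + t₀ • E) e₀) (h₀ : IsSimpleNonresonant e₀) :
    {t : ℝ | ∃ e, IsEigList (A + t • E) e ∧ ¬IsSimpleNonresonant e}.Countable := by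
  refine (countable_resonancePolys.biUnion fun P hP =>
    (finite_setOf_isEigList_aeval_eq_zero A E (MvPolynomial.isSymmetric_symmetrize P) he₀
      ?_).countable).mono ?_
  · exact MvPolynomial.aeval_symmetrize_ne_zero_iff.2 fun τ =>
      isSimpleNonresonant_iff_forall_aeval_ne_zero.1 (h₀.comp_perm τ) P hP
  · rintro t ⟨e, he, hres⟩
    obtain ⟨P, hP, hPe⟩ : ∃ P ∈ resonancePolys n ℂ, MvPolynomial.aeval e P = 0 := by
      simpa [isSimpleNonresonant_iff_forall_aeval_ne_zero] using hres
    refine Set.mem_biUnion hP ⟨e, he, not_not.1 fun hne => ?_⟩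
    simpa [hPe] using MvPolynomial.aeval_symmetrize_ne_zero_iff.1 hne 1

theorem Filter.Eventually.exists_notMem_of_countable {E : Type*} [NormedAddCommGroup E]
    [NormedSpace ℝ E] [Nontrivial E] {p : E → Prop} {x : E} (hp : ∀ᶠ y in 𝓝 x, p y)
    {T : Set E} (hT : T.Countable) : ∃ y ∉ T, p y := by
  obtain ⟨y, hy, hpy⟩ := (hT.dense_compl ℝ).inter_nhds_nonempty hp
  exact ⟨y, hy, hpy⟩

theorem nonresonant_dense_in_S_general (n : ℕ)
    (A : Matrix (Fin n) (Fin n) ℝ) (hAS : MemS A) (ε : ℝ) (hε : 0 < ε) :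
    ∃ B : Matrix (Fin n) (Fin n) ℝ,
      MemS B ∧ MemN B ∧ ∀ i j, |B i j - A i j| < ε := by
  obtain ⟨d, hd⟩ := exists_isSimpleNonresonant_ofReal n
  let E := diagonal d - A
  have hE : IsEigList (A + (1 : ℝ) • E) fun i => d i := by
    rw [one_smul, add_sub_cancel]
    exact isEigList_diagonal d
  have hball : IsOpen {B : Matrix (Fin n) (Fin n) ℝ | ∀ i j, |B i j - A i j| < ε} := by
    simp only [Set.ofPred_forall]
    exact isOpen_iInter_of_finite fun i => isOpen_iInter_of_finite fun j =>
      isOpen_lt (by fun_prop) continuous_const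
  have hnear : ∀ᶠ t in 𝓝 (0 : ℝ), MemS (A + t • E) ∧ ∀ i j, |(A + t • E) i j - A i j| < ε :=
    ((by fun_prop : Continuous fun t : ℝ => A + t • E).tendsto' 0 A (by simp)).eventually_mem
      ((isOpen_setOf_memS.inter hball).mem_nhds ⟨hAS, fun _ _ => by simpa using hε⟩)
  obtain ⟨t, hgeneric, hS, hclose⟩ :=
    hnear.exists_notMem_of_countable (countable_setOf_not_isSimpleNonresonant A E hE hd)
  exact ⟨A + t • E, hS,
    memN_of_forall_isEigList fun e he => not_not.1 fun h => hgeneric ⟨e, he, h⟩, hclose⟩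

/-- `𝒩_n ∩ 𝒮_n` is dense in `𝒮_n`: every `A ∈ 𝒮_n` is approximated, entrywise within any
`ε > 0`, by a matrix `B ∈ 𝒮_n` that is invertible, has `n` distinct complex eigenvalues,
and is `∞`-nonresonant. -/
theorem nonresonant_dense_in_S (n : ℕ) (hn : 1 ≤ n)
    (A : Matrix (Fin n) (Fin n) ℝ) (hAS : MemS A) (ε : ℝ) (hε : 0 < ε) :
    ∃ B : Matrix (Fin n) (Fin n) ℝ,
      MemS B ∧ MemN B ∧ ∀ i j, |B i j - A i j| < ε :=
  nonresonant_dense_in_S_general n A hAS ε hε
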